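/- Suppose preference values are symmetric and all distinct: V_{ij} = V_{ji} and V_{ij} ≠ V_{kl} for distinct pairs. Then the greedy algorithm that repeatedly matches the unmatched pair with the largest V value produces a stable matching (no blocking pair exists). -/
import Mathlib


open Real Set

lemma greedy_aux
    (M : ℕ) (V : Fin M → Fin M → ℝ)
    (hsym : ∀ i j, V i j = V j i)
    (pairs : List (Fin M × Fin M))
    (hcover : ∀ a : Fin M, ∃! t : Fin pairs.length,
      a = (pairs.get t).1 ∨ a = (pairs.get t).2)
    (hgreedy : ∀ t : Fin pairs.length,
      (pairs.get t).1 ≠ (pairs.get t).2 ∧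
      ∀ k l : Fin M, k ≠ l →
        (∀ s : Fin pairs.length, (s : ℕ) < (t : ℕ) →
          k ≠ (pairs.get s).1 ∧ k ≠ (pairs.get s).2) →
        (∀ s : Fin pairs.length, (s : ℕ) < (t : ℕ) →
          l ≠ (pairs.get s).1 ∧ l ≠ (pairs.get s).2) →
        V k l ≤ V (pairs.get t).1 (pairs.get t).2)
    (i j i' : Fin M) (hij : i ≠ j)
    (ti tj : Fin pairs.length) (hle : (ti : ℕ) ≤ (tj : ℕ))
    (hti : pairs.get ti = (i, i') ∨ pairs.get ti = (i', i))
    (htj : j = (pairs.get tj).1 ∨ j = (pairs.get tj).2) :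
    V i j ≤ V i i' := by
  have hiIn : i = (pairs.get ti).1 ∨ i = (pairs.get ti).2 := by
    rcases hti with h | h <;> rw [h] <;> simp
  obtain ⟨u, -, hu⟩ := hcover i
  obtain ⟨w, -, hw⟩ := hcover j
  have hui : ti = u := hu ti hiIn
  have hwj : tj = w := hw tj htj
  have hiun : ∀ s : Fin pairs.length, (s : ℕ) < (ti : ℕ) →
      i ≠ (pairs.get s).1 ∧ i ≠ (pairs.get s).2 := by
    intro s hs
    constructor <;> intro h <;>
      · have := hu s (by tauto)
        rw [← hui] at this; omega
  have hjun : ∀ s : Fin pairs.length, (s : ℕ) < (ti : ℕ) →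
      j ≠ (pairs.get s).1 ∧ j ≠ (pairs.get s).2 := by
    intro s hs
    constructor <;> intro h <;>
      · have := hw s (by tauto)
        rw [← hwj] at this; omega
  have := (hgreedy ti).2 i j hij hiun hjun
  rcases hti with h | h <;> rw [h] at this
  · exact this
  · exact this.trans_eq (hsym i' i)

/-- Suppose preference values are symmetric and all distinct. Then the
greedy algorithm that repeatedly matches the unmatched pair with the largest
`V` value produces a stable matching (no blocking pair exists). A run of the
greedy algorithm is a list of pairs covering every agent exactly once such
that each pair maximizes `V` among agents that were still unmatched. -/
theorem greedy_matching_is_stable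
    (M : ℕ) (hM : Even M) (V : Fin M → Fin M → ℝ)
    (hsym : ∀ i j, V i j = V j i)
    (hdist : ∀ i j k l : Fin M, i ≠ j → k ≠ l →
      ¬(i = k ∧ j = l) → ¬(i = l ∧ j = k) → V i j ≠ V k l)
    (pairs : List (Fin M × Fin M))
    -- every agent appears in exactly one pair of the greedy run
    (hcover : ∀ a : Fin M, ∃! t : Fin pairs.length,
      a = (pairs.get t).1 ∨ a = (pairs.get t).2)
    -- greedy choice: each chosen pair is a genuine pair and maximizes V
    -- among the agents not matched at an earlier step
    (hgreedy : ∀ t : Fin pairs.length,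
      (pairs.get t).1 ≠ (pairs.get t).2 ∧
      ∀ k l : Fin M, k ≠ l →
        (∀ s : Fin pairs.length, (s : ℕ) < (t : ℕ) →
          k ≠ (pairs.get s).1 ∧ k ≠ (pairs.get s).2) →
        (∀ s : Fin pairs.length, (s : ℕ) < (t : ℕ) →
          l ≠ (pairs.get s).1 ∧ l ≠ (pairs.get s).2) →
        V k l ≤ V (pairs.get t).1 (pairs.get t).2) :
    -- stability of the produced matching: no blocking pair
    ¬∃ i j i' j' : Fin M,
      (∃ t : Fin pairs.length, pairs.get t = (i, i') ∨ pairs.get t = (i', i)) ∧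
      (∃ t : Fin pairs.length, pairs.get t = (j, j') ∨ pairs.get t = (j', j)) ∧
      i ≠ j ∧
      (¬∃ t : Fin pairs.length, pairs.get t = (i, j) ∨ pairs.get t = (j, i)) ∧
      V i j > V i i' ∧ V i j > V j j' := by
  rintro ⟨i, j, i', j', ⟨ti, hti⟩, ⟨tj, htj⟩, hij, -, hb1, hb2⟩
  have hjIn : j = (pairs.get tj).1 ∨ j = (pairs.get tj).2 := by
    rcases htj with h | h <;> rw [h] <;> simp
  have hiIn : i = (pairs.get ti).1 ∨ i = (pairs.get ti).2 := by
    rcases hti with h | h <;> rw [h] <;> simp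
  rcases le_total (ti : ℕ) (tj : ℕ) with hle | hle
  · exact absurd (greedy_aux M V hsym pairs hcover hgreedy i j i' hij ti tj hle hti hjIn)
      (not_le.mpr hb1)
  · have := greedy_aux M V hsym pairs hcover hgreedy j i j' (Ne.symm hij) tj ti hle htj hiIn
    rw [hsym j i] at this
    exact absurd this (not_le.mpr hb2)
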